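/- arXiv:math/0412353 — 3 statements merged into one kernel-verified Lean document; each statement's English description precedes it below -/
import Mathlib

section
/- Let Δ be a finite set of linear functionals (simple roots) on a real vector space 𝔞 with dual basis relations as follows: Δ = Δ^Q ⊔ Δ', and for each δ ∈ Δ' the restriction of δ to the span of the coroots of Δ^Q is a nonpositive linear combination of the elements of Δ^Q. Fix s ≥ 1 and c in the cone {b : b^α > s for all α ∈ Δ^Q} (multiplicative coordinates b^α = exp⟨α, log b⟩). Set m_c = max_{α∈Δ^Q} c^α / s > 1. Then for any a in the shifted cone A(m_c s) = {a : a^α > m_c s for all α ∈ Δ} and any b with c^α ≤ b^α ≤ (a^Q)^α for all α ∈ Δ^Q (where a = a_Q a^Q is the decomposition along the splitting determined by Δ^Q), the point a_Q b lies in A(s) = {x : x^α > s for all α ∈ Δ}. -/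
/-! Roots in `Q` vanish on the `A_Q`-factor, so on `a_Q b` they see only `b`, and `b^α ≥ c^α > s`.
A root `δ ∉ Q` restricts to `A^Q` as a nonpositive combination of `Q`; since `b^α ≤ (a^Q)^α`
for `α ∈ Q`, replacing `a^Q` by `b` can only increase `δ`, so `(a_Q b)^δ ≥ a^δ > m s > s`. -/

lemma one_lt_sup'_div {ι : Type*} {Q : Finset ι} (hQ : Q.Nonempty) (f : ι → ℝ) {s : ℝ}
    (hs : 0 < s) (hf : ∀ i ∈ Q, s < f i) : 1 < Q.sup' hQ f / s := by
  rw [one_lt_div hs, Finset.lt_sup'_iff]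
  obtain ⟨i, hi⟩ := hQ
  exact ⟨i, hi, hf i hi⟩

section Projection

variable {V : Type*} [AddCommGroup V] [Module ℝ V] {Q : Finset (V →ₗ[ℝ] ℝ)} {p : V →ₗ[ℝ] V}

lemma apply_sub_proj_add_eq (hvanish : ∀ α ∈ Q, ∀ v : V, α (v - p v) = 0)
    {α : V →ₗ[ℝ] ℝ} (hα : α ∈ Q) (a b : V) : α ((a - p a) + b) = α b := by
  rw [map_add, hvanish α hα a, zero_add]

lemma apply_proj_le_of_nonpos_comb {δ : V →ₗ[ℝ] ℝ} {w : (V →ₗ[ℝ] ℝ) → ℝ}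
    (hw : ∀ α ∈ Q, w α ≤ 0) (hdecomp : ∀ v : V, δ (p v) = ∑ α ∈ Q, w α * α v)
    {x y : V} (hxy : ∀ α ∈ Q, α x ≤ α y) : δ (p y) ≤ δ (p x) := by
  rw [hdecomp, hdecomp]
  exact Finset.sum_le_sum fun α hα => mul_le_mul_of_nonpos_left (hxy α hα) (hw α hα)

lemma le_apply_sub_proj_add (hvanish : ∀ α ∈ Q, ∀ v : V, α (v - p v) = 0)
    {δ : V →ₗ[ℝ] ℝ} {w : (V →ₗ[ℝ] ℝ) → ℝ}
    (hw : ∀ α ∈ Q, w α ≤ 0) (hdecomp : ∀ v : V, δ (p v) = ∑ α ∈ Q, w α * α v)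
    {a b : V} (hb : p b = b) (hba : ∀ α ∈ Q, α b ≤ α (p a)) :
    δ a ≤ δ ((a - p a) + b) := by
  have hba' : ∀ α ∈ Q, α b ≤ α a := fun α hα => by
    have := hvanish α hα a
    rw [map_sub] at this
    linarith [hba α hα]
  have hmono := apply_proj_le_of_nonpos_comb hw hdecomp hba'
  rw [hb] at hmono
  rw [map_add, map_sub]
  linarith

end Projection

theorem stmt2_general {V : Type*} [AddCommGroup V] [Module ℝ V]
    (Δ Q : Finset (V →ₗ[ℝ] ℝ)) (hQne : Q.Nonempty)
    (p : V →ₗ[ℝ] V)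
    (hvanish : ∀ α ∈ Q, ∀ v : V, α (v - p v) = 0)
    (coeff : (V →ₗ[ℝ] ℝ) → (V →ₗ[ℝ] ℝ) → ℝ)
    (hcoeff_nonpos : ∀ δ ∈ Δ, δ ∉ Q → ∀ α ∈ Q, coeff δ α ≤ 0)
    (hdecomp : ∀ δ ∈ Δ, δ ∉ Q → ∀ v : V, δ (p v) = ∑ α ∈ Q, coeff δ α * α v)
    (s : ℝ) (hs : 1 ≤ s)
    (c : V) (hcs : ∀ α ∈ Q, s < Real.exp (α c))
    (m : ℝ) (hm : m = Q.sup' hQne (fun α => Real.exp (α c)) / s) :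
    1 < m ∧
      ∀ a : V, (∀ δ ∈ Δ, m * s < Real.exp (δ a)) →
      ∀ b : V, p b = b → (∀ α ∈ Q, α c ≤ α b ∧ α b ≤ α (p a)) →
      ∀ δ ∈ Δ, s < Real.exp (δ ((a - p a) + b)) := by
  have hs0 : 0 < s := zero_lt_one.trans_le hs
  have hm1 : 1 < m := hm ▸ one_lt_sup'_div hQne _ hs0 hcs
  refine ⟨hm1, fun a ha b hb hcba δ hδ => ?_⟩
  by_cases hδQ : δ ∈ Q
  · rw [apply_sub_proj_add_eq hvanish hδQ]
    exact (hcs δ hδQ).trans_le (Real.exp_le_exp.mpr (hcba δ hδQ).1)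
  · calc s < m * s := lt_mul_of_one_lt_left hs0 hm1
      _ < Real.exp (δ a) := ha δ hδ
      _ ≤ Real.exp (δ ((a - p a) + b)) := Real.exp_le_exp.mpr <|
          le_apply_sub_proj_add hvanish (hcoeff_nonpos δ hδ hδQ) (hdecomp δ hδ hδQ) hb
            fun α hα => (hcba α hα).2

/-- Lemma 9.2 (lemHomotopyFormulaNeighborhoods): with `Δ` simple roots,
`Q ⊆ Δ`, the splitting `a = a_Q a^Q` given by a projection `p` onto the span
of the coroots of `Q` (so that roots in `Q` vanish on the `A_Q`-factor, and
each `δ ∈ Δ \ Q` restricts to `A^Q` as a nonpositive combination of `Q`),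
`s ≥ 1`, `c` in the `A^Q`-factor with `c^α > s` for `α ∈ Q`, and
`m = max_{α ∈ Q} c^α / s`, one has `m > 1` and: for every `a` with
`a^δ > m·s` for all `δ ∈ Δ` and every `b` in the `A^Q`-factor with
`c^α ≤ b^α ≤ (a^Q)^α` for all `α ∈ Q`, the point `a_Q b` lies in the cone
`{x : x^δ > s for all δ ∈ Δ}`.  (Multiplicative coordinates
`a^λ = exp⟨λ, log a⟩`.) -/
theorem stmt2 {V : Type*} [AddCommGroup V] [Module ℝ V]
    (Δ Q : Finset (V →ₗ[ℝ] ℝ)) (hQ : Q ⊆ Δ) (hQne : Q.Nonempty)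
    (p : V →ₗ[ℝ] V)
    (hvanish : ∀ α ∈ Q, ∀ v : V, α (v - p v) = 0)
    (coeff : (V →ₗ[ℝ] ℝ) → (V →ₗ[ℝ] ℝ) → ℝ)
    (hcoeff_nonpos : ∀ δ ∈ Δ, δ ∉ Q → ∀ α ∈ Q, coeff δ α ≤ 0)
    (hdecomp : ∀ δ ∈ Δ, δ ∉ Q → ∀ v : V, δ (p v) = ∑ α ∈ Q, coeff δ α * α v)
    (s : ℝ) (hs : 1 ≤ s)
    (c : V) (hc : p c = c) (hcs : ∀ α ∈ Q, s < Real.exp (α c))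
    (m : ℝ) (hm : m = Q.sup' hQne (fun α => Real.exp (α c)) / s) :
    1 < m ∧
      ∀ a : V, (∀ δ ∈ Δ, m * s < Real.exp (δ a)) →
      ∀ b : V, p b = b → (∀ α ∈ Q, α c ≤ α b ∧ α b ≤ α (p a)) →
      ∀ δ ∈ Δ, s < Real.exp (δ ((a - p a) + b)) :=
  stmt2_general Δ Q hQne p hvanish coeff hcoeff_nonpos hdecomp s hs c hcs m hm
end

section
/- Let Δ be the set of simple roots of a root system on a real vector space, with coroots α∨ and fundamental coweights β_α∨. For a linear functional λ there exists one and only one subset S ⊆ Δ such that ⟨λ, β_α^S∨⟩ ≥ 0 for all α ∈ S and ⟨λ, γ∨ restricted-projection⟩ < 0 for all γ ∈ Δ \ S, in the sense of Langlands: writing 𝔞 = 𝔞_S ⊕ 𝔞^S according to S, the conditions are ⟨λ, β_α^S∨⟩ ≥ 0 for α ∈ S (fundamental coweights of the sub-root-system spanned by S) and ⟨λ, (γ∨)_S⟩ < 0 for γ ∉ S (projection of γ∨ to 𝔞_S). -/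
open scoped RealInnerProductSpace

/-- Langlands's "geometric lemma" (Borel–Wallach IV §6.11): in a
finite-dimensional inner product space with an obtuse basis `a` of simple
(co)roots, given for each subset `S` the projection `proj S` onto the
complement `𝔞_S` (killed by the roots in `S`, with `v − proj S v` in the span
of the coroots of `S`) and the partial fundamental coweights
`fcw S i = β_i^S∨` (in the span of the coroots of `S`, dual there to the roots
of `S`), every `λ` admits one and only one subset `S` with
`⟨λ, β_i^S∨⟩ ≥ 0` for `i ∈ S` and `⟨λ, (a_j∨)_S⟩ < 0` for `j ∉ S`. -/
theorem stmt6 {V : Type*} [NormedAddCommGroup V] [InnerProductSpace ℝ V]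
    [FiniteDimensional ℝ V]
    {ι : Type*} [Fintype ι] [DecidableEq ι]
    (a : ι → V)
    (hindep : LinearIndependent ℝ a)
    (hspan : Submodule.span ℝ (Set.range a) = ⊤)
    (hobtuse : ∀ i j, i ≠ j → ⟪a i, a j⟫ ≤ 0)
    (proj : Finset ι → V →ₗ[ℝ] V)
    (hproj_ker : ∀ (S : Finset ι) (v : V), ∀ i ∈ S, ⟪a i, proj S v⟫ = 0)
    (hproj_span : ∀ (S : Finset ι) (v : V),
      v - proj S v ∈ Submodule.span ℝ (a '' (S : Set ι)))
    (fcw : Finset ι → ι → V)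
    (hfcw_mem : ∀ (S : Finset ι), ∀ i ∈ S,
      fcw S i ∈ Submodule.span ℝ (a '' (S : Set ι)))
    (hfcw_dual : ∀ (S : Finset ι), ∀ i ∈ S, ∀ j ∈ S,
      ⟪a j, fcw S i⟫ = if i = j then 1 else 0)
    (lam : V) :
    ∃! S : Finset ι, (∀ i ∈ S, 0 ≤ ⟪lam, fcw S i⟫) ∧
      ∀ j, j ∉ S → ⟪lam, proj S (a j)⟫ < 0 := by
  classical
  -- the basis given by `a`
  let b : Module.Basis ι ℝ V := Module.Basis.mk hindep (by rw [hspan])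
  have hb : ∀ i, b i = a i := fun i => by simp [b]
  -- expansion of inner products along the basis
  have keysum : ∀ v w : V, ⟪v, w⟫ = ∑ i, b.repr v i * ⟪a i, w⟫ := by
    intro v w
    conv_lhs => rw [← b.sum_repr v]
    rw [sum_inner]
    refine Finset.sum_congr rfl fun i _ => ?_
    rw [real_inner_smul_left, hb]
  -- support of basis coefficients of elements of `span (a '' S)`
  have hsupp : ∀ (S : Finset ι) (v : V), v ∈ Submodule.span ℝ (a '' (S : Set ι)) →
      ∀ i, b.repr v i ≠ 0 → i ∈ S := by
    intro S v hv i hi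
    have hv' : v ∈ Submodule.span ℝ (⇑b '' (S : Set ι)) := by
      have : ⇑b = a := funext hb
      rwa [this]
    exact b.mem_span_image.1 hv' (Finsupp.mem_support_iff.2 hi)
  -- orthogonality: if `v` is supported in `S` and `w ⊥ a i` for `i ∈ S` then `⟪v, w⟫ = 0`
  have key : ∀ (S : Finset ι) (v w : V), (∀ i, b.repr v i ≠ 0 → i ∈ S) →
      (∀ i ∈ S, ⟪a i, w⟫ = 0) → ⟪v, w⟫ = 0 := by
    intro S v w hsup hw
    rw [keysum]
    refine Finset.sum_eq_zero fun i _ => ?_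
    by_cases h : b.repr v i = 0
    · rw [h, zero_mul]
    · rw [hw i (hsup i h), mul_zero]
  -- coefficients via fundamental coweights
  have key2 : ∀ (S : Finset ι), ∀ i ∈ S, ∀ v : V, (∀ j, b.repr v j ≠ 0 → j ∈ S) →
      ⟪v, fcw S i⟫ = b.repr v i := by
    intro S i hi v hsup
    rw [keysum]
    rw [Finset.sum_eq_single i]
    · rw [hfcw_dual S i hi i hi, if_pos rfl, mul_one]
    · intro j _ hji
      by_cases hj : b.repr v j = 0
      · rw [hj, zero_mul]
      · rw [hfcw_dual S i hi j (hsup j hj), if_neg (fun h => hji h.symm), mul_zero]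
    · intro h; exact absurd (Finset.mem_univ i) h
  -- the antidominant cone
  set C : Set V := {v | ∀ i, ⟪a i, v⟫ ≤ 0} with hC
  have hCzero : (0 : V) ∈ C := fun i => by simp
  have hCconv : Convex ℝ C := by
    intro v hv w hw s t hs ht _
    intro i
    rw [inner_add_right, real_inner_smul_right, real_inner_smul_right]
    have := hv i; have := hw i
    nlinarith
  have hCclosed : IsClosed C := by
    have : C = ⋂ i, {v : V | ⟪a i, v⟫ ≤ 0} := by
      ext v; simp [hC, Set.mem_iInter]
    rw [this]
    exact isClosed_iInter fun i =>
      isClosed_le (Continuous.inner continuous_const continuous_id) continuous_const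
  obtain ⟨p, hpC, hmin⟩ :=
    exists_norm_eq_iInf_of_complete_convex ⟨0, hCzero⟩ (hCclosed.isComplete) hCconv lam
  have hvar : ∀ w ∈ C, ⟪lam - p, w - p⟫ ≤ 0 :=
    (norm_eq_iInf_iff_real_inner_le_zero hCconv hpC).1 hmin
  set q : V := lam - p with hq
  have hlam : lam = p + q := by rw [hq]; abel
  -- ⟪q, p⟫ = 0
  have hqp : ⟪q, p⟫ = 0 := by
    have h1 : ⟪q, (0 : V) - p⟫ ≤ 0 := hvar 0 hCzero
    have h2 : ((2 : ℝ) • p) ∈ C := by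
      intro i; rw [real_inner_smul_right]; have := hpC i; linarith
    have h3 : ⟪q, (2 : ℝ) • p - p⟫ ≤ 0 := hvar _ h2
    have e1 : ((2 : ℝ) • p - p) = p := by
      rw [two_smul]; abel
    rw [e1] at h3
    rw [zero_sub, inner_neg_right] at h1
    linarith
  have hqC : ∀ w ∈ C, ⟪q, w⟫ ≤ 0 := by
    intro w hw
    have := hvar w hw
    rw [inner_sub_right] at this
    linarith [hqp, this]
  -- coefficients of q are nonnegative
  have hd : ∀ i, 0 ≤ b.repr q i := by
    intro i
    have hmem : (-(fcw Finset.univ i)) ∈ C := by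
      intro j
      rw [inner_neg_right, hfcw_dual Finset.univ i (Finset.mem_univ i) j (Finset.mem_univ j)]
      split <;> norm_num
    have h1 := hqC _ hmem
    rw [inner_neg_right] at h1
    have h2 : ⟪q, fcw Finset.univ i⟫ = b.repr q i :=
      key2 Finset.univ i (Finset.mem_univ i) q (fun j _ => Finset.mem_univ j)
    linarith
  -- ⟪q, p⟫ as a sum; complementary slackness
  have hslack : ∀ i, b.repr q i ≠ 0 → ⟪a i, p⟫ = 0 := by
    intro i hi
    have hsum : ∑ j, b.repr q j * ⟪a j, p⟫ = 0 := by rw [← keysum]; exact hqp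
    have hterm : ∀ j ∈ Finset.univ, b.repr q j * ⟪a j, p⟫ ≤ 0 := fun j _ =>
      mul_nonpos_of_nonneg_of_nonpos (hd j) (hpC j)
    have := (Finset.sum_eq_zero_iff_of_nonpos hterm).1 hsum i (Finset.mem_univ i)
    rcases mul_eq_zero.1 this with h | h
    · exact absurd h hi
    · exact h
  set S₀ : Finset ι := Finset.univ.filter (fun i => ⟪a i, p⟫ = 0) with hS₀
  have hmemS₀ : ∀ i, i ∈ S₀ ↔ ⟪a i, p⟫ = 0 := by
    intro i; simp [hS₀]
  have hsuppq : ∀ i, b.repr q i ≠ 0 → i ∈ S₀ := fun i hi => (hmemS₀ i).2 (hslack i hi)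
  -- Existence: S₀ works
  have hex1 : ∀ i ∈ S₀, 0 ≤ ⟪lam, fcw S₀ i⟫ := by
    intro i hi
    have h1 : ⟪fcw S₀ i, p⟫ = 0 :=
      key S₀ (fcw S₀ i) p (hsupp S₀ _ (hfcw_mem S₀ i hi)) (fun j hj => (hmemS₀ j).1 hj)
    have h2 : ⟪q, fcw S₀ i⟫ = b.repr q i := key2 S₀ i hi q hsuppq
    rw [hlam, inner_add_left]
    have h4 := real_inner_comm p (fcw S₀ i)
    linarith [hd i]
  have hex2 : ∀ j, j ∉ S₀ → ⟪lam, proj S₀ (a j)⟫ < 0 := by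
    intro j hj
    have h1 : ⟪q, proj S₀ (a j)⟫ = 0 :=
      key S₀ q (proj S₀ (a j)) hsuppq (fun i hi => hproj_ker S₀ (a j) i hi)
    have h2 : ⟪a j - proj S₀ (a j), p⟫ = 0 :=
      key S₀ _ p (hsupp S₀ _ (hproj_span S₀ (a j))) (fun i hi => (hmemS₀ i).1 hi)
    have h3 : ⟪p, proj S₀ (a j)⟫ = ⟪a j, p⟫ := by
      rw [inner_sub_left] at h2
      rw [real_inner_comm]
      linarith [real_inner_comm (a j) p, h2]
    have h4 : ⟪a j, p⟫ ≠ 0 := fun h => hj ((hmemS₀ j).2 h)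
    have h5 : ⟪a j, p⟫ < 0 := lt_of_le_of_ne (hpC j) h4
    rw [hlam, inner_add_left, h1, h3, add_zero]
    exact h5
  -- Uniqueness: any S satisfying the conditions equals S₀
  have huniq : ∀ S : Finset ι, ((∀ i ∈ S, 0 ≤ ⟪lam, fcw S i⟫) ∧
      ∀ j, j ∉ S → ⟪lam, proj S (a j)⟫ < 0) → S = S₀ := by
    rintro S ⟨hS1, hS2⟩
    set pS : V := proj S lam with hpS
    set qS : V := lam - pS with hqS
    have hlamS : lam = pS + qS := by rw [hqS]; abel
    have hker : ∀ i ∈ S, ⟪a i, pS⟫ = 0 := fun i hi => hproj_ker S lam i hi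
    have hsuppqS : ∀ i, b.repr qS i ≠ 0 → i ∈ S := hsupp S qS (hproj_span S lam)
    -- projection is "self-adjoint" enough: ⟪lam, proj S (a j)⟫ = ⟪a j, pS⟫
    have hadj : ∀ j, ⟪lam, proj S (a j)⟫ = ⟪a j, pS⟫ := by
      intro j
      have h1 : ⟪qS, proj S (a j)⟫ = 0 :=
        key S qS _ hsuppqS (fun i hi => hproj_ker S (a j) i hi)
      have h2 : ⟪a j - proj S (a j), pS⟫ = 0 :=
        key S _ pS (hsupp S _ (hproj_span S (a j))) hker
      rw [inner_sub_left] at h2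
      rw [hlamS, inner_add_left, h1, add_zero]
      rw [real_inner_comm]
      linarith [real_inner_comm (proj S (a j)) pS, h2, real_inner_comm (a j) pS]
    have hneg : ∀ j, j ∉ S → ⟪a j, pS⟫ < 0 := fun j hj => (hadj j) ▸ hS2 j hj
    have hpSC : ∀ i, ⟪a i, pS⟫ ≤ 0 := by
      intro i
      by_cases hi : i ∈ S
      · exact le_of_eq (hker i hi)
      · exact le_of_lt (hneg i hi)
    have hcS : ∀ i, 0 ≤ b.repr qS i := by
      intro i
      by_cases hi : i ∈ S
      · have h1 : ⟪fcw S i, pS⟫ = 0 :=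
          key S _ pS (hsupp S _ (hfcw_mem S i hi)) hker
        have h2 : ⟪qS, fcw S i⟫ = b.repr qS i := key2 S i hi qS hsuppqS
        have h3 := hS1 i hi
        rw [hlamS, inner_add_left] at h3
        have h4 := real_inner_comm pS (fcw S i)
        linarith
      · rw [not_imp_comm.1 (hsuppqS i) hi]
    -- Moreau uniqueness: pS = p
    have hpSqS : ⟪pS, qS⟫ = 0 := by
      have := key S qS pS hsuppqS hker
      rw [real_inner_comm]; exact this
    have h1 : ⟪qS, p⟫ ≤ 0 := by
      rw [keysum]
      exact Finset.sum_nonpos fun i _ =>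
        mul_nonpos_of_nonneg_of_nonpos (hcS i) (hpC i)
    have h2 : ⟪q, pS⟫ ≤ 0 := by
      rw [keysum]
      exact Finset.sum_nonpos fun i _ =>
        mul_nonpos_of_nonneg_of_nonpos (hd i) (hpSC i)
    have hdiff : pS - p = q - qS := by
      rw [hq, hqS]; abel
    have hnormsq : ⟪pS - p, pS - p⟫ ≤ 0 := by
      have e : ⟪pS - p, pS - p⟫ = ⟪pS - p, q - qS⟫ := by rw [← hdiff]
      rw [e]
      simp only [inner_sub_left, inner_sub_right]
      linarith [real_inner_comm pS q, real_inner_comm p qS, real_inner_comm p q,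
        hpSqS, hqp, h1, h2]
    have hpp : pS = p := by
      have h0 : ⟪pS - p, pS - p⟫ = 0 :=
        le_antisymm hnormsq real_inner_self_nonneg
      have := inner_self_eq_zero.1 h0
      exact sub_eq_zero.1 this
    ext i
    rw [hmemS₀ i]
    constructor
    · intro hi; rw [← hpp]; exact hker i hi
    · intro hi
      by_contra hni
      exact absurd (hpp ▸ hneg i hni) (by rw [hi]; exact lt_irrefl 0)
  exact ⟨S₀, ⟨hex1, hex2⟩, huniq⟩
end

section
/- Let μ be a σ-finite measure on a space A, w : A → (0,∞) a weight, and for ε > 0 let g be an ε-admissible function composed with a proper function t : A → [0,∞). Suppose ψ is a measurable form-valued function on A × [c, x]-fibers such that for almost every slice the restriction is L² with weight g·w. Then the fiberwise integral operator (Hψ)(a) = ∫_{c}^{x(a)} ψ satisfies the Cauchy–Schwarz estimate |(Hψ)(a)|² ≤ (x(a) − c) ∫_c^{x(a)} |ψ|², and if x(a) − c ≤ g(t(a)) on the support of a cutoff χ, then ∫ χ² |Hψ|² w² dμ ≤ ∫_{supp χ} (∫_c^{x} |ψ|²) g(t) w² dμ. -/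
open MeasureTheory

lemma cs_interval (c d : ℝ) (hcd : c ≤ d) (f : ℝ → ℝ)
    (hf : IntervalIntegrable f volume c d)
    (hf2 : IntervalIntegrable (fun τ => (f τ) ^ 2) volume c d) :
    (∫ τ in c..d, f τ) ^ 2 ≤ (d - c) * ∫ τ in c..d, (f τ) ^ 2 := by
  rcases eq_or_lt_of_le hcd with rfl | h
  · simp
  set L : ℝ := d - c with hL
  have hL0 : 0 < L := by simpa [hL] using sub_pos.mpr h
  set I : ℝ := ∫ τ in c..d, f τ with hI
  set m : ℝ := I / L with hm
  have key : 0 ≤ ∫ τ in c..d, (f τ - m) ^ 2 := by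
    apply intervalIntegral.integral_nonneg hcd
    intro u _; positivity
  have expand : ∫ τ in c..d, (f τ - m) ^ 2
      = (∫ τ in c..d, (f τ) ^ 2) - 2 * m * I + m ^ 2 * L := by
    have h1 : ∀ τ, (f τ - m) ^ 2 = (f τ)^2 - 2 * m * f τ + m ^ 2 := by
      intro τ; ring
    simp_rw [h1]
    rw [intervalIntegral.integral_add (hf2.sub (hf.const_mul (2*m)))
        intervalIntegrable_const,
      intervalIntegral.integral_sub hf2 (hf.const_mul (2*m)),
      intervalIntegral.integral_const_mul, intervalIntegral.integral_const]
    simp [hL, hI]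
    ring
  rw [expand] at key
  have hdl : 2 * m * I - m ^ 2 * L = I ^ 2 / L := by
    have hmL : m * L = I := by rw [hm]; exact div_mul_cancel₀ I hL0.ne'
    field_simp [hm]; linear_combination (I - m * L) * hmL
  rw [show (∫ τ in c..d, (f τ) ^ 2) - 2 * m * I + m ^ 2 * L
      = (∫ τ in c..d, (f τ) ^ 2) - (2 * m * I - m ^ 2 * L) by ring, hdl] at key
  have h2 : I ^ 2 / L ≤ ∫ τ in c..d, (f τ) ^ 2 := by linarith
  have := (div_le_iff₀ hL0).mp h2
  linarith [this, mul_comm (∫ τ in c..d, (f τ) ^ 2) L]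

/-- The key analytic estimate (eqnHomotopyBounded) in the proof of Lemma 9.5:
for the fiberwise integration operator `(Hψ)(a) = ∫_c^{x(a)} ψ(a,·)` one has
the Cauchy–Schwarz bound `|(Hψ)(a)|² ≤ (x(a) − c) ∫_c^{x(a)} |ψ|²`, and if the
fiber length satisfies `x(a) − c ≤ g(t(a))` on the support of the cutoff `χ`
(with `0 ≤ χ ≤ 1`), then the weighted L² norm of `χ · Hψ` is bounded by
`∫_{supp χ} (∫_c^x |ψ|²) g(t) w² dμ`. -/
theorem stmt14 {A : Type*} [MeasurableSpace A] (μ : Measure A) [SigmaFinite μ]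
    (w : A → ℝ) (hw : ∀ a, 0 < w a)
    (g : ℝ → ℝ) (hg : ∀ r, 1 ≤ g r)
    (t : A → ℝ) (ht : ∀ a, 0 ≤ t a)
    (c : ℝ) (x : A → ℝ) (hcx : ∀ a, c ≤ x a)
    (ψ : A → ℝ → ℝ)
    (hψint : ∀ a, IntervalIntegrable (ψ a) volume c (x a))
    (hψsq : ∀ a, IntervalIntegrable (fun τ => (ψ a τ) ^ 2) volume c (x a))
    (χ : A → ℝ) (hχ : ∀ a, 0 ≤ χ a ∧ χ a ≤ 1)
    (hlen : ∀ a, χ a ≠ 0 → x a - c ≤ g (t a)) :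
    (∀ a, (∫ τ in c..x a, ψ a τ) ^ 2 ≤
        (x a - c) * ∫ τ in c..x a, (ψ a τ) ^ 2) ∧
      ∫⁻ a, ENNReal.ofReal
          ((χ a) ^ 2 * (∫ τ in c..x a, ψ a τ) ^ 2 * (w a) ^ 2) ∂μ ≤
        ∫⁻ a in {a | χ a ≠ 0}, ENNReal.ofReal
          ((∫ τ in c..x a, (ψ a τ) ^ 2) * g (t a) * (w a) ^ 2) ∂μ := by
  have hCS : ∀ a, (∫ τ in c..x a, ψ a τ) ^ 2 ≤
      (x a - c) * ∫ τ in c..x a, (ψ a τ) ^ 2 :=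
    fun a => cs_interval c (x a) (hcx a) (ψ a) (hψint a) (hψsq a)
  refine ⟨hCS, ?_⟩
  set s : Set A := {a | χ a ≠ 0} with hs
  have hpt : ∀ a, ENNReal.ofReal
      ((χ a) ^ 2 * (∫ τ in c..x a, ψ a τ) ^ 2 * (w a) ^ 2)
      ≤ s.indicator (fun a => ENNReal.ofReal
          ((∫ τ in c..x a, (ψ a τ) ^ 2) * g (t a) * (w a) ^ 2)) a := by
    intro a
    by_cases hc : χ a = 0
    · have : a ∉ s := by simp [hs, hc]
      simp [hc, Set.indicator_of_notMem this]
    · have hmem : a ∈ s := hc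
      rw [Set.indicator_of_mem hmem]
      apply ENNReal.ofReal_le_ofReal
      have hJ : 0 ≤ ∫ τ in c..x a, (ψ a τ) ^ 2 :=
        intervalIntegral.integral_nonneg (hcx a) (fun u _ => sq_nonneg _)
      have h1 : (χ a) ^ 2 ≤ 1 := by
        have := hχ a; nlinarith [this.1, this.2]
      have h2 : (∫ τ in c..x a, ψ a τ) ^ 2
          ≤ (∫ τ in c..x a, (ψ a τ) ^ 2) * g (t a) := by
        calc (∫ τ in c..x a, ψ a τ) ^ 2
            ≤ (x a - c) * ∫ τ in c..x a, (ψ a τ) ^ 2 := hCS a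
          _ ≤ g (t a) * ∫ τ in c..x a, (ψ a τ) ^ 2 :=
              mul_le_mul_of_nonneg_right (hlen a hc) hJ
          _ = (∫ τ in c..x a, (ψ a τ) ^ 2) * g (t a) := mul_comm _ _
      have hw2 : 0 ≤ (w a) ^ 2 := sq_nonneg _
      calc (χ a) ^ 2 * (∫ τ in c..x a, ψ a τ) ^ 2 * (w a) ^ 2
          ≤ 1 * (∫ τ in c..x a, ψ a τ) ^ 2 * (w a) ^ 2 := by
            apply mul_le_mul_of_nonneg_right _ hw2
            exact mul_le_mul_of_nonneg_right h1 (sq_nonneg _)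
        _ = (∫ τ in c..x a, ψ a τ) ^ 2 * (w a) ^ 2 := by ring
        _ ≤ ((∫ τ in c..x a, (ψ a τ) ^ 2) * g (t a)) * (w a) ^ 2 :=
            mul_le_mul_of_nonneg_right h2 hw2
  calc ∫⁻ a, ENNReal.ofReal
        ((χ a) ^ 2 * (∫ τ in c..x a, ψ a τ) ^ 2 * (w a) ^ 2) ∂μ
      ≤ ∫⁻ a, s.indicator (fun a => ENNReal.ofReal
          ((∫ τ in c..x a, (ψ a τ) ^ 2) * g (t a) * (w a) ^ 2)) a ∂μ :=
        lintegral_mono hpt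
    _ ≤ ∫⁻ a in s, ENNReal.ofReal
          ((∫ τ in c..x a, (ψ a τ) ^ 2) * g (t a) * (w a) ^ 2) ∂μ :=
        lintegral_indicator_le _ _
end
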